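/- Let M = F/I be a 0-free monoid, i.e., the Rees quotient of a free monoid F by a two-sided ideal I (elements of I are collapsed to 0). Then every 2-dimensional 0-cocycle of M with values in a 0-module A is a 0-coboundary; i.e., H²₀(M, A) = 0. Concretely: if f is a function on pairs (x,y) of nonzero elements of M with xy ≠ 0, satisfying x·f(y,z) − f(xy,z) + f(x,yz) − f(x,y) = 0 whenever xyz ≠ 0, then there is φ on M∖{0} with f(x,y) = x·φ(y) − φ(xy) + φ(x) whenever xy ≠ 0. -/
import Mathlib


/-- The underlying set of the 0-free monoid `M = F/I`: the Rees quotient of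
the free monoid `F` on `X` by a two-sided ideal `I`. -/
abbrev ReesFree (X : Type*) (I : Set (FreeMonoid X)) : Type _ :=
  WithZero {u : FreeMonoid X // u ∉ I}

open Classical in
/-- Multiplication of the Rees quotient: products falling into `I` are `0`. -/
noncomputable def reesMul {X : Type*} (I : Set (FreeMonoid X)) :
    ReesFree X I → ReesFree X I → ReesFree X I
  | Option.some u, Option.some v =>
      if h : (u : FreeMonoid X) * v ∈ I then 0 else Option.some ⟨(u : FreeMonoid X) * v, h⟩
  | _, _ => 0

open Classical in
/-- The canonical map from the free monoid to the Rees quotient. -/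
noncomputable def RF.m {X : Type*} (I : Set (FreeMonoid X)) (u : FreeMonoid X) :
    ReesFree X I :=
  if h : u ∈ I then 0 else Option.some ⟨u, h⟩

/-- The candidate potential function, defined by recursion on a word. -/
noncomputable def RF.g {X : Type*} (I : Set (FreeMonoid X)) {A : Type*} [AddCommGroup A]
    (act : ReesFree X I → A → A) (f : ReesFree X I → ReesFree X I → A) : List X → A
  | [] => f (RF.m I 1) (RF.m I 1)
  | x :: t =>
      act (RF.m I (FreeMonoid.of x)) (RF.g I act f t)
        - f (RF.m I (FreeMonoid.of x)) (RF.m I (FreeMonoid.ofList t))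
        - f (RF.m I 1) (RF.m I (FreeMonoid.of x))

/-- The candidate potential function on the Rees quotient. -/
noncomputable def RF.phi {X : Type*} (I : Set (FreeMonoid X)) {A : Type*} [AddCommGroup A]
    (act : ReesFree X I → A → A) (f : ReesFree X I → ReesFree X I → A) :
    ReesFree X I → A
  | Option.none => 0
  | Option.some u => RF.g I act f (FreeMonoid.toList u.1)

/-- Let `M = F/I` be a 0-free monoid, the Rees quotient of a
free monoid `F` by a two-sided ideal `I`.  Then every 2-dimensional 0-cocycle
of `M` with values in a 0-module `A` is a 0-coboundary; i.e. `H²₀(M, A) = 0`. -/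
theorem H2_zero_of_zeroFree_monoid {X : Type*} (I : Set (FreeMonoid X))
    (hI : ∀ u ∈ I, ∀ v : FreeMonoid X, u * v ∈ I ∧ v * u ∈ I)
    {A : Type*} [AddCommGroup A]
    (act : ReesFree X I → A → A)
    (hact_add : ∀ s : ReesFree X I, s ≠ 0 → ∀ a b : A,
      act s (a + b) = act s a + act s b)
    (hact_mul : ∀ s t : ReesFree X I, reesMul I s t ≠ 0 → ∀ a : A,
      act s (act t a) = act (reesMul I s t) a)
    (f : ReesFree X I → ReesFree X I → A)
    (hf : ∀ x y z : ReesFree X I, reesMul I (reesMul I x y) z ≠ 0 →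
      act x (f y z) - f (reesMul I x y) z + f x (reesMul I y z) - f x y = 0) :
    ∃ φ : ReesFree X I → A, ∀ x y : ReesFree X I, reesMul I x y ≠ 0 →
      f x y = act x (φ y) - φ (reesMul I x y) + φ x := by
  classical
  by_cases h1 : (1 : FreeMonoid X) ∈ I
  · -- degenerate case: everything is in `I`, so there is no nonzero product
    refine ⟨fun _ => 0, fun x y hxy => ?_⟩
    exfalso
    match x, y with
    | Option.none, Option.none => exact hxy rfl
    | Option.none, Option.some v => exact hxy rfl
    | Option.some u, Option.none => exact hxy rfl
    | Option.some u, Option.some v =>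
      exact u.2 ((one_mul (u : FreeMonoid X)) ▸ (hI 1 h1 u.1).1)
  -- main case
  -- basic facts about the ideal
  have hfacL : ∀ u v : FreeMonoid X, u * v ∉ I → u ∉ I :=
    fun u v h hu => h ((hI u hu v).1)
  have hfacR : ∀ u v : FreeMonoid X, u * v ∉ I → v ∉ I :=
    fun u v h hv => h ((hI v hv u).2)
  -- basic facts about `m`
  have hmval : ∀ (u : FreeMonoid X) (hu : u ∉ I), RF.m I u = Option.some ⟨u, hu⟩ :=
    fun u hu => dif_neg hu
  have hmne : ∀ (u : FreeMonoid X), u ∉ I → RF.m I u ≠ 0 := by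
    intro u hu
    rw [hmval u hu]
    exact Option.some_ne_none _
  have hmul : ∀ u v : FreeMonoid X, u ∉ I → v ∉ I →
      reesMul I (RF.m I u) (RF.m I v) = RF.m I (u * v) := by
    intro u v hu hv
    rw [hmval u hu, hmval v hv]
    simp only [reesMul, RF.m]
  -- linearity consequences
  have hsub : ∀ s : ReesFree X I, s ≠ 0 → ∀ a b : A, act s (a - b) = act s a - act s b := by
    intro s hs a b
    have h := hact_add s hs b (a - b)
    rw [add_sub_cancel] at h
    exact eq_sub_of_add_eq' h.symm
  -- cocycle condition in word form
  have hfword : ∀ u v w : FreeMonoid X, u * v * w ∉ I →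
      act (RF.m I u) (f (RF.m I v) (RF.m I w)) - f (RF.m I (u * v)) (RF.m I w)
        + f (RF.m I u) (RF.m I (v * w)) - f (RF.m I u) (RF.m I v) = 0 := by
    intro u v w h
    have huv : u * v ∉ I := hfacL _ _ h
    have hw : w ∉ I := hfacR _ _ h
    have hu : u ∉ I := hfacL _ _ huv
    have hv : v ∉ I := hfacR _ _ huv
    have hvw : v * w ∉ I := hfacR u (v * w) (by rw [← mul_assoc]; exact h)
    have e1 : reesMul I (RF.m I u) (RF.m I v) = RF.m I (u * v) := hmul u v hu hv
    have e2 : reesMul I (RF.m I v) (RF.m I w) = RF.m I (v * w) := hmul v w hv hw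
    have e3 : reesMul I (RF.m I (u * v)) (RF.m I w) = RF.m I (u * v * w) := hmul _ w huv hw
    have := hf (RF.m I u) (RF.m I v) (RF.m I w) (by rw [e1, e3]; exact hmne _ h)
    rwa [e1, e2] at this
  -- action in word form
  have hactword : ∀ u v : FreeMonoid X, u * v ∉ I → ∀ a : A,
      act (RF.m I u) (act (RF.m I v) a) = act (RF.m I (u * v)) a := by
    intro u v h a
    have hu : u ∉ I := hfacL _ _ h
    have hv : v ∉ I := hfacR _ _ h
    have e1 : reesMul I (RF.m I u) (RF.m I v) = RF.m I (u * v) := hmul u v hu hv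
    have := hact_mul (RF.m I u) (RF.m I v) (by rw [e1]; exact hmne _ h) a
    rwa [e1] at this
  set e : A := f (RF.m I 1) (RF.m I 1) with he_def
  -- consequences of the cocycle involving the unit
  have he1 : act (RF.m I 1) e = e := by
    have h0 := hfword 1 1 1 (by simpa using h1)
    simp only [one_mul, mul_one] at h0
    have h' : act (RF.m I 1) e - e = 0 := by rw [← h0]; abel
    exact sub_eq_zero.mp h'
  have hx1 : ∀ u : FreeMonoid X, u ∉ I → f (RF.m I u) (RF.m I 1) = act (RF.m I u) e := by
    intro u hu
    have h0 := hfword u 1 1 (by simpa using hu)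
    simp only [mul_one, one_mul] at h0
    have h' : act (RF.m I u) e - f (RF.m I u) (RF.m I 1) = 0 := by rw [← h0]; abel
    exact (sub_eq_zero.mp h').symm
  have h1z : ∀ v : FreeMonoid X, v ∉ I → act (RF.m I 1) (f (RF.m I 1) (RF.m I v)) = e := by
    intro v hv
    have h0 := hfword 1 1 v (by simpa using hv)
    simp only [one_mul, mul_one] at h0
    have h' : act (RF.m I 1) (f (RF.m I 1) (RF.m I v)) - e = 0 := by rw [← h0]; abel
    exact sub_eq_zero.mp h'
  have h1yz : ∀ v w : FreeMonoid X, v * w ∉ I →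
      act (RF.m I 1) (f (RF.m I v) (RF.m I w))
        = f (RF.m I v) (RF.m I w) - f (RF.m I 1) (RF.m I (v * w)) + f (RF.m I 1) (RF.m I v) := by
    intro v w h
    have h0 := hfword 1 v w (by simpa using h)
    simp only [one_mul] at h0
    have h' : act (RF.m I 1) (f (RF.m I v) (RF.m I w))
        - (f (RF.m I v) (RF.m I w) - f (RF.m I 1) (RF.m I (v * w))
            + f (RF.m I 1) (RF.m I v)) = 0 := by
      rw [← h0]; abel
    exact sub_eq_zero.mp h'
  have h1ne : RF.m I (1 : FreeMonoid X) ≠ 0 := hmne 1 h1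
  -- the key "star" lemma
  have hstar : ∀ l : List X, FreeMonoid.ofList l ∉ I →
      act (RF.m I 1) (RF.g I act f l)
        = RF.g I act f l + f (RF.m I 1) (RF.m I (FreeMonoid.ofList l)) - e := by
    intro l
    induction l with
    | nil =>
      intro _
      show act (RF.m I 1) e = e + f (RF.m I 1) (RF.m I 1) - e
      rw [he1, ← he_def]; abel
    | cons x t ih =>
      intro h
      have h' : FreeMonoid.of x * FreeMonoid.ofList t ∉ I := h
      have hx : FreeMonoid.of x ∉ I := hfacL _ _ h'
      have ht : FreeMonoid.ofList t ∉ I := hfacR _ _ h'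
      have h1x : (1 : FreeMonoid X) * FreeMonoid.of x ∉ I := by simpa using hx
      show act (RF.m I 1)
          (act (RF.m I (FreeMonoid.of x)) (RF.g I act f t)
            - f (RF.m I (FreeMonoid.of x)) (RF.m I (FreeMonoid.ofList t))
            - f (RF.m I 1) (RF.m I (FreeMonoid.of x)))
        = (act (RF.m I (FreeMonoid.of x)) (RF.g I act f t)
            - f (RF.m I (FreeMonoid.of x)) (RF.m I (FreeMonoid.ofList t))
            - f (RF.m I 1) (RF.m I (FreeMonoid.of x)))
          + f (RF.m I 1) (RF.m I (FreeMonoid.ofList (x :: t))) - e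
      rw [hsub _ h1ne, hsub _ h1ne, hactword 1 (FreeMonoid.of x) h1x, one_mul,
        h1yz _ _ h', h1z _ hx]
      have hmm : RF.m I (FreeMonoid.ofList (x :: t))
          = RF.m I (FreeMonoid.of x * FreeMonoid.ofList t) := rfl
      rw [hmm]
      abel
  -- the key "dagger" lemma
  have hmain : ∀ (l : List X) (v : FreeMonoid X), FreeMonoid.ofList l * v ∉ I →
      f (RF.m I (FreeMonoid.ofList l)) (RF.m I v)
        = act (RF.m I (FreeMonoid.ofList l)) (RF.g I act f (FreeMonoid.toList v))
          - RF.g I act f (FreeMonoid.toList (FreeMonoid.ofList l * v))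
          + RF.g I act f l := by
    intro l
    induction l with
    | nil =>
      intro v h
      have hv : v ∉ I := by simpa using h
      have h2 : FreeMonoid.ofList (FreeMonoid.toList v) = v := rfl
      have h3 : FreeMonoid.toList ((1 : FreeMonoid X) * v) = FreeMonoid.toList v := by
        rw [one_mul]
      have hs := hstar (FreeMonoid.toList v) (by rwa [h2])
      rw [h2] at hs
      show f (RF.m I 1) (RF.m I v)
        = act (RF.m I 1) (RF.g I act f (FreeMonoid.toList v))
          - RF.g I act f (FreeMonoid.toList ((1 : FreeMonoid X) * v)) + e
      rw [h3, hs]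
      abel
    | cons x t ih =>
      intro v h
      have hassoc : FreeMonoid.ofList (x :: t) * v
          = FreeMonoid.of x * (FreeMonoid.ofList t * v) := by
          rw [FreeMonoid.ofList_cons, mul_assoc]
      have h' : FreeMonoid.of x * (FreeMonoid.ofList t * v) ∉ I := by rwa [hassoc] at h
      have hx : FreeMonoid.of x ∉ I := hfacL _ _ h'
      have htv : FreeMonoid.ofList t * v ∉ I := hfacR _ _ h'
      have ht : FreeMonoid.ofList t ∉ I := hfacL _ _ htv
      have hv : v ∉ I := hfacR _ _ htv
      have hxt : FreeMonoid.of x * FreeMonoid.ofList t ∉ I :=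
        hfacL _ _ (by rwa [← mul_assoc] at h')
      -- cocycle at (of x, ofList t, v)
      have hco := hfword (FreeMonoid.of x) (FreeMonoid.ofList t) v (by rwa [← mul_assoc] at h')
      -- induction hypothesis
      have hih := ih v htv
      -- apply act (of x) to hih
      have hxne : RF.m I (FreeMonoid.of x) ≠ 0 := hmne _ hx
      have hih2 : act (RF.m I (FreeMonoid.of x)) (f (RF.m I (FreeMonoid.ofList t)) (RF.m I v))
          = act (RF.m I (FreeMonoid.of x * FreeMonoid.ofList t))
              (RF.g I act f (FreeMonoid.toList v))
            - act (RF.m I (FreeMonoid.of x))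
                (RF.g I act f (FreeMonoid.toList (FreeMonoid.ofList t * v)))
            + act (RF.m I (FreeMonoid.of x)) (RF.g I act f t) := by
        rw [hih, hact_add _ hxne, hsub _ hxne,
          hactword (FreeMonoid.of x) (FreeMonoid.ofList t) hxt]
      -- unfold g on the two cons-lists appearing in the goal
      have hg1 : RF.g I act f (FreeMonoid.toList (FreeMonoid.ofList (x :: t) * v))
          = act (RF.m I (FreeMonoid.of x))
              (RF.g I act f (FreeMonoid.toList (FreeMonoid.ofList t * v)))
            - f (RF.m I (FreeMonoid.of x)) (RF.m I (FreeMonoid.ofList t * v))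
            - f (RF.m I 1) (RF.m I (FreeMonoid.of x)) := by
        have hL : FreeMonoid.toList (FreeMonoid.ofList (x :: t) * v)
            = x :: FreeMonoid.toList (FreeMonoid.ofList t * v) := rfl
        have hO : FreeMonoid.ofList (FreeMonoid.toList (FreeMonoid.ofList t * v))
            = FreeMonoid.ofList t * v := rfl
        rw [hL]
        show act (RF.m I (FreeMonoid.of x))
              (RF.g I act f (FreeMonoid.toList (FreeMonoid.ofList t * v)))
            - f (RF.m I (FreeMonoid.of x))
                (RF.m I (FreeMonoid.ofList (FreeMonoid.toList (FreeMonoid.ofList t * v))))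
            - f (RF.m I 1) (RF.m I (FreeMonoid.of x)) = _
        rw [hO]
      have hg2 : RF.g I act f (x :: t)
          = act (RF.m I (FreeMonoid.of x)) (RF.g I act f t)
            - f (RF.m I (FreeMonoid.of x)) (RF.m I (FreeMonoid.ofList t))
            - f (RF.m I 1) (RF.m I (FreeMonoid.of x)) := rfl
      have hmm : RF.m I (FreeMonoid.ofList (x :: t))
          = RF.m I (FreeMonoid.of x * FreeMonoid.ofList t) := rfl
      rw [hg1, hg2, hmm]
      rw [hih2] at hco
      have h'' : (act (RF.m I (FreeMonoid.of x * FreeMonoid.ofList t))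
                (RF.g I act f (FreeMonoid.toList v))
              - (act (RF.m I (FreeMonoid.of x))
                    (RF.g I act f (FreeMonoid.toList (FreeMonoid.ofList t * v)))
                  - f (RF.m I (FreeMonoid.of x)) (RF.m I (FreeMonoid.ofList t * v))
                  - f (RF.m I 1) (RF.m I (FreeMonoid.of x)))
              + (act (RF.m I (FreeMonoid.of x)) (RF.g I act f t)
                  - f (RF.m I (FreeMonoid.of x)) (RF.m I (FreeMonoid.ofList t))
                  - f (RF.m I 1) (RF.m I (FreeMonoid.of x))))
          - f (RF.m I (FreeMonoid.of x * FreeMonoid.ofList t)) (RF.m I v) = 0 := by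
        rw [← hco]; abel
      exact (sub_eq_zero.mp h'').symm
  -- assemble the potential function
  refine ⟨RF.phi I act f, ?_⟩
  intro x y hxy
  match x, y with
  | Option.none, Option.none => exact absurd rfl hxy
  | Option.none, Option.some v => exact absurd rfl hxy
  | Option.some u, Option.none => exact absurd rfl hxy
  | Option.some u, Option.some v =>
    have hu : (u : FreeMonoid X) ∉ I := u.2
    have hv : (v : FreeMonoid X) ∉ I := v.2
    have huv : (u.1 * v.1 : FreeMonoid X) ∉ I := by
      intro hmem
      exact hxy (by simp [reesMul, hmem])
    have hxu' : (Option.some u : ReesFree X I) = RF.m I u.1 := by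
      rw [hmval u.1 hu]
    have hyv' : (Option.some v : ReesFree X I) = RF.m I v.1 := by
      rw [hmval v.1 hv]
    have hmulval : reesMul I (Option.some u) (Option.some v) = RF.m I (u.1 * v.1) := by
      rw [hxu', hyv', hmul _ _ hu hv]
    have hOL : FreeMonoid.ofList (FreeMonoid.toList u.1) = u.1 := rfl
    have key := hmain (FreeMonoid.toList u.1) v.1 (by rwa [hOL])
    rw [hOL] at key
    have hφmul : RF.phi I act f (reesMul I (Option.some u) (Option.some v))
        = RF.g I act f (FreeMonoid.toList (u.1 * v.1)) := by
      rw [hmulval, hmval _ huv]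
      rfl
    have hφu : RF.phi I act f (Option.some u)
        = RF.g I act f (FreeMonoid.toList u.1) := rfl
    have hφv : RF.phi I act f (Option.some v)
        = RF.g I act f (FreeMonoid.toList v.1) := rfl
    rw [hφmul, hφu, hφv, hxu', hyv']
    exact key
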